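/- Let σ² > 0 satisfy e·σ² < 1 and let ρ, σ_F ≥ 0. Then Σ_{i=2}^∞ (1/i!)·ρ·σ_F·√(σ^{2i}·(2i)!/(2^i i!)) ≤ ρ·σ_F·π^{−1/2}·2^{−1/2}·(e σ²)/(1 − √(e σ²)). -/

import Mathlib

/-!
Bounding `(2i)!` by `4^i (i!)^2` (central binomial coefficients) and `2π 2^i` by `i! e^i`
(for `i ≥ 3`; the case `i = 2` is checked by hand) shows that the `i`-th term of the series is at
most `ρ σ_F (2π)^{-1/2} (√(e σ²))^i` for every `i ≥ 2`. Summing this geometric tail gives the bound.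
-/

open Real Nat

theorem Nat.factorial_two_mul_le_four_pow_mul_sq (n : ℕ) : (2 * n)! ≤ 4 ^ n * n ! ^ 2 := by
  have h : (2 * n)! = centralBinom n * n ! * n ! := by
    rw [centralBinom_eq_two_mul_choose, ← choose_mul_factorial_mul_factorial (by omega : n ≤ 2 * n),
      show 2 * n - n = n by omega]
  rw [h, sq, ← mul_assoc]
  gcongr
  exact centralBinom_le_four_pow n

theorem two_mul_pi_mul_two_pow_le_factorial_mul_exp_one_pow {n : ℕ} (hn : 3 ≤ n) :
    2 * π * 2 ^ n ≤ n ! * exp 1 ^ n := by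
  induction n, hn using Nat.le_induction with
  | base =>
    have he : (2.7 : ℝ) ≤ exp 1 := by linarith [exp_one_gt_d9]
    have he3 : (2.7 : ℝ) ^ 3 ≤ exp 1 ^ 3 := by gcongr
    norm_num [factorial] at he3 ⊢
    linarith [pi_le_four]
  | succ n hn ih =>
    have h2 : (2 : ℝ) ≤ (n + 1) * exp 1 := by
      nlinarith [exp_one_gt_two, (by exact_mod_cast (by omega : 1 ≤ n) : (1 : ℝ) ≤ n)]
    calc 2 * π * 2 ^ (n + 1) = 2 * π * 2 ^ n * 2 := by ring
      _ ≤ n ! * exp 1 ^ n * ((n + 1) * exp 1) := by gcongr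
      _ = (n + 1)! * exp 1 ^ (n + 1) := by push_cast [factorial_succ]; ring

theorem two_mul_pi_mul_factorial_two_mul_le {n : ℕ} (hn : 2 ≤ n) :
    2 * π * (2 * n)! ≤ (n ! : ℝ) ^ 3 * (2 * exp 1) ^ n := by
  rcases hn.eq_or_lt with rfl | hn
  · have he : (2.7 : ℝ) ≤ exp 1 := by linarith [exp_one_gt_d9]
    norm_num [factorial]
    nlinarith [pi_le_four]
  have hfac : ((2 * n)! : ℝ) ≤ 4 ^ n * (n ! : ℝ) ^ 2 := by
    exact_mod_cast Nat.factorial_two_mul_le_four_pow_mul_sq n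
  calc 2 * π * (2 * n)! ≤ 2 * π * (4 ^ n * (n ! : ℝ) ^ 2) := by gcongr
    _ = 2 * π * 2 ^ n * (2 ^ n * (n ! : ℝ) ^ 2) := by
      rw [show (4 : ℝ) = 2 * 2 by norm_num, mul_pow]; ring
    _ ≤ n ! * exp 1 ^ n * (2 ^ n * (n ! : ℝ) ^ 2) := by
      gcongr ?_ * _; exact two_mul_pi_mul_two_pow_le_factorial_mul_exp_one_pow hn
    _ = (n ! : ℝ) ^ 3 * (2 * exp 1) ^ n := by rw [mul_pow]; ring

theorem one_div_factorial_mul_sqrt_le {s : ℝ} (hs : 0 ≤ s) {n : ℕ} (hn : 2 ≤ n) :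
    1 / (n ! : ℝ) * √(s ^ n * (2 * n)! / (2 ^ n * n !)) ≤ (√(2 * π))⁻¹ * √(exp 1 * s) ^ n := by
  have hfac : (0 : ℝ) < n ! := by exact_mod_cast factorial_pos n
  rw [one_div_mul_eq_div, div_le_iff₀ hfac, sqrt_le_iff]
  refine ⟨by positivity, ?_⟩
  have hrhs : ((√(2 * π))⁻¹ * √(exp 1 * s) ^ n * n !) ^ 2
      = (n ! : ℝ) ^ 2 * (exp 1 * s) ^ n / (2 * π) := by
    rw [mul_pow, mul_pow, inv_pow, sq_sqrt (by positivity), ← pow_mul, mul_comm n 2, pow_mul,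
      sq_sqrt (by positivity)]
    ring
  rw [hrhs, div_le_div_iff₀ (by positivity) (by positivity)]
  calc s ^ n * (2 * n)! * (2 * π) = 2 * π * (2 * n)! * s ^ n := by ring
    _ ≤ (n ! : ℝ) ^ 3 * (2 * exp 1) ^ n * s ^ n := by
      gcongr ?_ * _; exact two_mul_pi_mul_factorial_two_mul_le hn
    _ = (n ! : ℝ) ^ 2 * (exp 1 * s) ^ n * (2 ^ n * n !) := by rw [mul_pow, mul_pow]; ring

theorem tsum_le_mul_pow_div_one_sub {f : ℕ → ℝ} {c x : ℝ} (k : ℕ) (hf₀ : ∀ j, 0 ≤ f j)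
    (hf : ∀ j, f j ≤ c * x ^ (j + k)) (hx₀ : 0 ≤ x) (hx₁ : x < 1) :
    ∑' j, f j ≤ c * x ^ k / (1 - x) := by
  have hg : HasSum (fun j ↦ c * x ^ (j + k)) (c * x ^ k / (1 - x)) := by
    rw [div_eq_mul_inv]
    exact ((hasSum_geometric_of_lt_one hx₀ hx₁).mul_left (c * x ^ k)).congr_fun
      fun j ↦ by rw [pow_add]; ring
  exact hasSum_le hf (Summable.of_nonneg_of_le hf₀ hf hg.summable).hasSum hg

/-- If `e σ² < 1` (with `σ² > 0`, `ρ, σ_F ≥ 0`), then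
`Σ_{i=2}^∞ (1/i!) ρ σ_F √(σ^{2i} (2i)!/(2^i i!))
  ≤ ρ σ_F π^{-1/2} 2^{-1/2} (e σ²)/(1 − √(e σ²))`.
Here `s = σ²` and the series is indexed by `i = j + 2`, `j ≥ 0`. -/
theorem covariance_tail_bound (s ρ σF : ℝ) (hs : 0 < s)
    (hes : Real.exp 1 * s < 1) (hρ : 0 ≤ ρ) (hσF : 0 ≤ σF) :
    ∑' j : ℕ,
        (1 / (Nat.factorial (j + 2) : ℝ)) * (ρ * σF *
          Real.sqrt (s ^ (j + 2) * (Nat.factorial (2 * (j + 2))) /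
            (2 ^ (j + 2) * Nat.factorial (j + 2))))
      ≤ ρ * σF * (Real.sqrt Real.pi)⁻¹ * (Real.sqrt 2)⁻¹ *
          (Real.exp 1 * s) / (1 - Real.sqrt (Real.exp 1 * s)) := by
  have hx₁ : √(exp 1 * s) < 1 := by rw [sqrt_lt' one_pos, one_pow]; exact hes
  have hterm (j : ℕ) : 1 / ((j + 2)! : ℝ) * (ρ * σF *
      √(s ^ (j + 2) * (2 * (j + 2))! / (2 ^ (j + 2) * (j + 2)!)))
      ≤ ρ * σF * (√(2 * π))⁻¹ * √(exp 1 * s) ^ (j + 2) := by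
    rw [mul_left_comm, mul_assoc (ρ * σF)]
    exact mul_le_mul_of_nonneg_left (one_div_factorial_mul_sqrt_le hs.le (by omega))
      (by positivity)
  calc _ ≤ ρ * σF * (√(2 * π))⁻¹ * √(exp 1 * s) ^ 2 / (1 - √(exp 1 * s)) :=
        tsum_le_mul_pow_div_one_sub 2 (fun j ↦ by positivity) hterm (sqrt_nonneg _) hx₁
    _ = _ := by
      rw [sq_sqrt (by positivity), sqrt_mul zero_le_two, mul_inv]; ring
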